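/- If every intermediate transient footprint of a contiguous block equals at least max(t⁰, tⁿ) (input and output transient footprints), then among all schedules of the whole graph, there exists an optimal (minimum peak memory) schedule in which the block's operators appear contiguously. In particular, restricting the search to schedules where the block is fused does not increase the minimum achievable peak memory. -/

import Mathlib

/-- Number of `g`-steps (true) among positions `≤ t` (inclusive). -/
def countG {N : ℕ} (b : Fin N → Bool) (t : Fin N) : ℕ :=
  (Finset.univ.filter (fun t' : Fin N => t' ≤ t ∧ b t' = true)).card

/-- Number of `Y`-steps (false) among positions `≤ t` (inclusive). -/
def countY {N : ℕ} (b : Fin N → Bool) (t : Fin N) : ℕ :=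
  (Finset.univ.filter (fun t' : Fin N => t' ≤ t ∧ b t' = false)).card

/-- Number of `g`-steps strictly before position `t`. -/
def countGBefore {N : ℕ} (b : Fin N → Bool) (t : Fin N) : ℕ :=
  (Finset.univ.filter (fun t' : Fin N => t' < t ∧ b t' = true)).card

/-- Number of `Y`-steps strictly before position `t`. -/
def countYBefore {N : ℕ} (b : Fin N → Bool) (t : Fin N) : ℕ :=
  (Finset.univ.filter (fun t' : Fin N => t' < t ∧ b t' = false)).card

/-- Global stable footprint at position `t` of an interleaving `b` of the
sequence `g` (stable footprints `sg`, transient `tg`) with the parallel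
operators `Y` (stable footprints `sy`, transient `ty`): when `g` executes, it is
`s_g^i + t_y^k`; when `y` executes, it is `s_y^k + t_g^i`. -/
def stableAt {N : ℕ} (sg tg sy ty : ℕ → ℝ) (b : Fin N → Bool) (t : Fin N) : ℝ :=
  if b t then sg (countG b t) + ty (countYBefore b t)
  else sy (countY b t) + tg (countGBefore b t)

/-- Peak memory of an interleaving: max over all steps of the stable footprint. -/
noncomputable def peakMem {N : ℕ} (sg tg sy ty : ℕ → ℝ) (b : Fin N → Bool) : ℝ :=
  ⨆ t : Fin N, stableAt sg tg sy ty b t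

/-- The `g`-steps form a contiguous block. -/
def contiguous {N : ℕ} (b : Fin N → Bool) : Prop :=
  ∀ t1 t2 t3 : Fin N, t1 ≤ t2 → t2 ≤ t3 → b t1 = true → b t3 = true → b t2 = true


/-! Exchange argument. In an interleaving `b`, take the `g`-step at which the transient
footprint `t_y^k` of the parallel operators is smallest and run the whole block there, i.e.
after exactly `k` of the `y`-steps. Every `g`-step of the block then costs `s_g^i + t_y^k`, at
most what the same step costs in `b`. A `y`-step before the block costs `s_y + t_g^0`; in `b`
it ran before that `g`-step, hence alongside some `t_g^i` with `i < n`. A `y`-step after the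
block costs `s_y + t_g^n`; in `b` it ran alongside some `t_g^i` with `0 < i ≤ n`. The hypothesis
`max t_g^0 t_g^n ≤ t_g^i` for `0 < i < n` makes both replacements cheaper, so some block schedule
is no worse than `b`, and the best of the finitely many block schedules is optimal. -/

open Finset

lemma card_filter_and_le_card_filter {α : Type*} [Fintype α] (r q : α → Prop) [DecidablePred r]
    [DecidablePred q] : #{x | r x ∧ q x} ≤ #{x | q x} :=
  card_le_card <| monotone_filter_right _ fun _ _ ↦ And.right

section Counting

variable {α : Type*} [Fintype α] [LinearOrder α] (q : α → Prop) [DecidablePred q]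

lemma card_filter_le_eq_card_filter_lt_add_one {t : α} (ht : q t) :
    #{x | x ≤ t ∧ q x} = #{x | x < t ∧ q x} + 1 := by
  have : univ.filter (fun x ↦ x ≤ t ∧ q x) = insert t (univ.filter fun x ↦ x < t ∧ q x) := by
    ext x
    simp only [mem_filter, mem_univ, true_and, mem_insert, le_iff_lt_or_eq]
    constructor
    · rintro ⟨hx | rfl, hqx⟩
      exacts [Or.inr ⟨hx, hqx⟩, Or.inl rfl]
    · rintro (rfl | ⟨hx, hqx⟩)
      exacts [⟨Or.inr rfl, ht⟩, ⟨Or.inl hx, hqx⟩]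
  rw [this, card_insert_of_notMem (by simp)]

lemma card_filter_lt_mono {s t : α} (h : s ≤ t) :
    #{x | x < s ∧ q x} ≤ #{x | x < t ∧ q x} :=
  card_le_card fun x ↦ by
    simp only [mem_filter, mem_univ, true_and]
    exact fun hx ↦ ⟨hx.1.trans_le h, hx.2⟩

lemma card_filter_le_le_card_filter_lt {s t : α} (h : s < t) :
    #{x | x ≤ s ∧ q x} ≤ #{x | x < t ∧ q x} :=
  card_le_card fun x ↦ by
    simp only [mem_filter, mem_univ, true_and]
    exact fun hx ↦ ⟨hx.1.trans_lt h, hx.2⟩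

lemma exists_card_filter_le_eq_add_one {i : ℕ} (hi : i < #{x | q x}) :
    ∃ t, q t ∧ #{x | x ≤ t ∧ q x} = i + 1 := by
  set e := ({x | q x} : Finset α).orderEmbOfFin rfl
  have hq : ∀ j, q (e j) := fun j ↦ (mem_filter.mp (orderEmbOfFin_mem _ rfl j)).2
  refine ⟨e ⟨i, hi⟩, hq _, ?_⟩
  have : univ.filter (fun x ↦ x ≤ e ⟨i, hi⟩ ∧ q x) = (Iic ⟨i, hi⟩).map e.toEmbedding := by
    ext x
    simp only [mem_filter, mem_univ, true_and, mem_map, mem_Iic, RelEmbedding.coe_toEmbedding]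
    constructor
    · rintro ⟨hx, hqx⟩
      have : x ∈ Set.range e := by
        rw [range_orderEmbOfFin]
        simpa using hqx
      obtain ⟨j, rfl⟩ := this
      exact ⟨j, e.le_iff_le.mp hx, rfl⟩
    · rintro ⟨j, hj, rfl⟩
      exact ⟨e.le_iff_le.mpr hj, hq j⟩
  rw [this, card_map, Fin.card_Iic]

end Counting

lemma card_filter_val_mem_Ico {N a c : ℕ} (hc : c ≤ N) :
    #{t : Fin N | a ≤ t.val ∧ t.val < c} = c - a := by
  rw [← card_map Fin.valEmbedding, map_filter', Fin.map_valEmbedding_univ, ← Nat.card_Ico]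
  congr 1
  ext x
  simp only [mem_filter, mem_Iio, mem_Ico, Fin.valEmbedding_apply]
  constructor
  · rintro ⟨-, y, hy, rfl⟩
    exact hy
  · intro hx
    exact ⟨by omega, ⟨x, by omega⟩, hx, rfl⟩

section Interleaving

variable {N : ℕ}

lemma countG_add_countY (b : Fin N → Bool) (t : Fin N) : countG b t + countY b t = t.val + 1 := by
  rw [← Fin.card_Iic, ← filter_ge_eq_Iic, ← card_filter_add_card_filter_not (b · = true),
    filter_filter, filter_filter]
  simp only [countG, countY, Bool.not_eq_true]

lemma countGBefore_add_countYBefore (b : Fin N → Bool) (t : Fin N) :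
    countGBefore b t + countYBefore b t = t.val := by
  rw [← Fin.card_Iio, ← filter_gt_eq_Iio, ← card_filter_add_card_filter_not (b · = true),
    filter_filter, filter_filter]
  simp only [countGBefore, countYBefore, Bool.not_eq_true]

lemma peakMem_le_of_forall_exists_stableAt_le {sg tg sy ty : ℕ → ℝ} {b b' : Fin N → Bool}
    (h : ∀ t, ∃ t', stableAt sg tg sy ty b' t ≤ stableAt sg tg sy ty b t') :
    peakMem sg tg sy ty b' ≤ peakMem sg tg sy ty b := by
  cases isEmpty_or_nonempty (Fin N)
  · simp [peakMem]
  · exact ciSup_mono_of_forall_exists (Set.finite_range _).bddAbove h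

def blockSchedule (k n : ℕ) : Fin N → Bool := fun t ↦ decide (k ≤ t.val ∧ t.val < k + n)

lemma card_blockSchedule {k n : ℕ} (h : k + n ≤ N) :
    #{t : Fin N | blockSchedule k n t = true} = n := by
  simp only [blockSchedule, decide_eq_true_eq]
  rw [card_filter_val_mem_Ico h, Nat.add_sub_cancel_left]

lemma contiguous_blockSchedule (k n : ℕ) : contiguous (blockSchedule k n : Fin N → Bool) := by
  intro t₁ t₂ t₃ h₁₂ h₂₃ h₁ h₃
  simp only [blockSchedule, decide_eq_true_eq, Fin.le_def] at *
  omega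

lemma countG_blockSchedule (k n : ℕ) (t : Fin N) :
    countG (blockSchedule k n) t = min (t.val + 1) (k + n) - k := by
  rw [countG, ← card_filter_val_mem_Ico (min_le_of_left_le t.isLt)]
  congr 1
  refine filter_congr fun x _ ↦ ?_
  simp only [blockSchedule, decide_eq_true_eq, Fin.le_def]
  omega

lemma countGBefore_blockSchedule (k n : ℕ) (t : Fin N) :
    countGBefore (blockSchedule k n) t = min t.val (k + n) - k := by
  rw [countGBefore, ← card_filter_val_mem_Ico (min_le_of_left_le t.isLt.le)]
  congr 1
  refine filter_congr fun x _ ↦ ?_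
  simp only [blockSchedule, decide_eq_true_eq, Fin.lt_def]
  omega

variable {sg tg sy ty : ℕ → ℝ} {k n : ℕ} {t : Fin N}

lemma stableAt_blockSchedule_of_lt (h : t.val < k) :
    stableAt sg tg sy ty (blockSchedule k n) t = sy (t.val + 1) + tg 0 := by
  have hb : blockSchedule k n t = false := by
    simp only [blockSchedule, decide_eq_false_iff_not]
    omega
  have hG := countG_blockSchedule k n t
  have hGB := countGBefore_blockSchedule k n t
  have hGY := countG_add_countY (blockSchedule k n) t
  rw [stableAt, if_neg (by simp [hb]), hGB]
  congr 2 <;> omega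

lemma stableAt_blockSchedule_of_mem (h₁ : k ≤ t.val) (h₂ : t.val < k + n) :
    stableAt sg tg sy ty (blockSchedule k n) t = sg (t.val - k + 1) + ty k := by
  have hb : blockSchedule k n t = true := by simp [blockSchedule, h₁, h₂]
  have hG := countG_blockSchedule k n t
  have hGB := countGBefore_blockSchedule k n t
  have hGY := countGBefore_add_countYBefore (blockSchedule k n) t
  rw [stableAt, if_pos hb, hG]
  congr 2 <;> omega

lemma stableAt_blockSchedule_of_le (h : k + n ≤ t.val) :
    stableAt sg tg sy ty (blockSchedule k n) t = sy (t.val - n + 1) + tg n := by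
  have hb : blockSchedule k n t = false := by
    simp only [blockSchedule, decide_eq_false_iff_not]
    omega
  have hG := countG_blockSchedule k n t
  have hGB := countGBefore_blockSchedule k n t
  have hGY := countG_add_countY (blockSchedule k n) t
  rw [stableAt, if_neg (by simp [hb]), hGB]
  congr 2 <;> omega

end Interleaving

section Exchange

variable {N : ℕ} {sg tg sy ty : ℕ → ℝ} {b : Fin N → Bool}

lemma exists_stableAt_ge_of_lt_card_true {c : ℝ}
    (hc : ∀ t, b t = true → c ≤ ty (countYBefore b t)) {i : ℕ}
    (hi : i < #{t | b t = true}) : ∃ t', sg (i + 1) + c ≤ stableAt sg tg sy ty b t' := by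
  obtain ⟨t', hbt', hG⟩ := exists_card_filter_le_eq_add_one (b · = true) hi
  refine ⟨t', ?_⟩
  rw [stableAt, if_pos hbt', countG, hG]
  linarith [hc t' hbt']

variable {n : ℕ} (ht : ∀ i, 1 ≤ i → i < n → max (tg 0) (tg n) ≤ tg i)
  (hb : #{t | b t = true} = n) {p : Fin N} (hp : b p = true)
include ht hb hp

lemma exists_stableAt_ge_of_lt_countYBefore {j : ℕ} (hj : j < countYBefore b p) :
    ∃ t', sy (j + 1) + tg 0 ≤ stableAt sg tg sy ty b t' := by
  obtain ⟨q, hbq, hY⟩ := exists_card_filter_le_eq_add_one (b · = false)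
    (hj.trans_le (card_filter_and_le_card_filter _ _))
  replace hY : countY b q = j + 1 := hY
  have hqp : q < p := lt_of_not_ge fun hpq ↦ by
    have h₁ : countYBefore b p ≤ countYBefore b q := card_filter_lt_mono _ hpq
    have h₂ : countY b q = countYBefore b q + 1 :=
      card_filter_le_eq_card_filter_lt_add_one _ hbq
    omega
  have hGq : countGBefore b q < n := by
    have h₁ : countGBefore b q ≤ countGBefore b p := card_filter_lt_mono _ hqp.le
    have h₂ : countG b p = countGBefore b p + 1 := card_filter_le_eq_card_filter_lt_add_one _ hp
    have h₃ : countG b p ≤ n := hb ▸ card_filter_and_le_card_filter _ _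
    omega
  have htg : tg 0 ≤ tg (countGBefore b q) := by
    rcases Nat.eq_zero_or_pos (countGBefore b q) with h0 | hpos
    · rw [h0]
    · exact (le_max_left _ _).trans (ht _ hpos hGq)
  refine ⟨q, ?_⟩
  rw [stableAt, if_neg (by simp [hbq]), hY]
  linarith

lemma exists_stableAt_ge_of_countYBefore_le {j : ℕ} (hj : countYBefore b p ≤ j)
    (hjm : j < #{t | b t = false}) : ∃ t', sy (j + 1) + tg n ≤ stableAt sg tg sy ty b t' := by
  obtain ⟨q, hbq, hY⟩ := exists_card_filter_le_eq_add_one (b · = false) hjm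
  replace hY : countY b q = j + 1 := hY
  have hpq : p < q := lt_of_not_ge fun hqp ↦ by
    have hqp' : q < p := lt_of_le_of_ne hqp (by rintro rfl; simp [hp] at hbq)
    have h₁ : countY b q ≤ countYBefore b p := card_filter_le_le_card_filter_lt _ hqp'
    omega
  have hGq : 1 ≤ countGBefore b q := by
    have h₁ : countG b p ≤ countGBefore b q := card_filter_le_le_card_filter_lt _ hpq
    have h₂ : countG b p = countGBefore b p + 1 := card_filter_le_eq_card_filter_lt_add_one _ hp
    omega
  have hGq' : countGBefore b q ≤ n := hb ▸ card_filter_and_le_card_filter _ _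
  have htg : tg n ≤ tg (countGBefore b q) := by
    rcases hGq'.lt_or_eq with hlt | heq
    · exact (le_max_right _ _).trans (ht _ hGq hlt)
    · rw [heq]
  refine ⟨q, ?_⟩
  rw [stableAt, if_neg (by simp [hbq]), hY]
  linarith

end Exchange

lemma exists_blockSchedule_peakMem_le {n m : ℕ} (hn : 0 < n) {sg tg sy ty : ℕ → ℝ}
    (ht : ∀ i, 1 ≤ i → i < n → max (tg 0) (tg n) ≤ tg i) {b : Fin (n + m) → Bool}
    (hb : #{t | b t = true} = n) :
    ∃ k ≤ m,
      peakMem sg tg sy ty (blockSchedule k n : Fin (n + m) → Bool) ≤ peakMem sg tg sy ty b := by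
  obtain ⟨p, hp, hmin⟩ := exists_min_image {t | b t = true} (fun t ↦ ty (countYBefore b t))
    (card_pos.mp (hb.symm ▸ hn))
  replace hp : b p = true := (mem_filter.mp hp).2
  have hfalse : #{t | b t = false} = m := by
    have := card_filter_add_card_filter_not (s := univ) (b · = true)
    simp only [Bool.not_eq_true, card_univ, Fintype.card_fin, hb] at this
    omega
  set k := countYBefore b p
  have hk : k ≤ m := hfalse ▸ card_filter_and_le_card_filter _ _
  refine ⟨k, hk, peakMem_le_of_forall_exists_stableAt_le fun t ↦ ?_⟩
  rcases lt_or_ge t.val k with hbefore | hstart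
  · rw [stableAt_blockSchedule_of_lt hbefore]
    exact exists_stableAt_ge_of_lt_countYBefore ht hb hp hbefore
  rcases lt_or_ge t.val (k + n) with hin | hafter
  · rw [stableAt_blockSchedule_of_mem hstart hin]
    exact exists_stableAt_ge_of_lt_card_true
      (fun t' ht' ↦ hmin t' (mem_filter.mpr ⟨mem_univ _, ht'⟩)) (by omega)
  · rw [stableAt_blockSchedule_of_le hafter]
    exact exists_stableAt_ge_of_countYBefore_le ht hb hp (by omega) (by omega)

/-- if every intermediate transient footprint of the block `g` is
at least `max (tg 0) (tg n)`, then among all interleavings of `g` with the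
parallel operators there is one of minimum peak memory in which the block's
operators appear contiguously; restricting the search to fused schedules does
not increase the minimum achievable peak memory. -/
theorem stmt_13 (n m : ℕ) (hn : 0 < n) (sg tg sy ty : ℕ → ℝ)
    (ht : ∀ i, 1 ≤ i → i < n → max (tg 0) (tg n) ≤ tg i) :
    ∃ b' : Fin (n + m) → Bool,
      (Finset.univ.filter (fun t : Fin (n + m) => b' t = true)).card = n ∧
      contiguous b' ∧
      ∀ b : Fin (n + m) → Bool,
        (Finset.univ.filter (fun t : Fin (n + m) => b t = true)).card = n →
        peakMem sg tg sy ty b' ≤ peakMem sg tg sy ty b := by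
  obtain ⟨k, hk, hmin⟩ := exists_min_image (range (m + 1))
    (fun k ↦ peakMem sg tg sy ty (blockSchedule k n : Fin (n + m) → Bool)) ⟨0, by simp⟩
  have hkm : k ≤ m := Nat.lt_succ_iff.mp (mem_range.mp hk)
  refine ⟨blockSchedule k n, card_blockSchedule (by omega),
    contiguous_blockSchedule k n, fun b hb ↦ ?_⟩
  obtain ⟨k', hk', hle⟩ := exists_blockSchedule_peakMem_le hn ht hb
  exact (hmin k' (mem_range.mpr (by omega))).trans hle
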